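/- Fix τ > 2, let d₁,…,dₙ be i.i.d. copies of D, and let μ := E[D]. Then there exists a constant c' > 0 depending only on τ such that for all sufficiently large n: if 2 < τ < 3 then P(|Σᵢ₌₁ⁿ dᵢ − nμ| > nμ/2) ≤ c'·n^{−(τ−2)}; if τ = 3 then P(|Σᵢ₌₁ⁿ dᵢ − nμ| > nμ/2) ≤ c'·(log n)/n; and if τ > 3 then P(|Σᵢ₌₁ⁿ dᵢ − nμ| > nμ/2) ≤ c'/n. -/

import Mathlib

/-!
Truncate every degree at level `n`. Some `dᵢ` with `i < n` exceeds `n` with probability at most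
`n · P(D > n) = O(n^{2-τ})`; off that event the sum equals the sum of the truncated degrees
`min(dᵢ, n)`, whose mean is within `nμ/4` of `nμ` once `n` is large (the truncation loses only
`E[D; D > n] = O(n^{2-τ})` per variable), and whose variance is at most `n · E[min(D, n)²]`.
Chebyshev then bounds the remaining probability by `16 E[min(D, n)²] / (n μ²)`, and
`E[min(D, n)²] ≲ ∑_{k ≤ n} k^{2-τ} + n^{3-τ}`, which is `O(n^{3-τ})`, `O(log n)` or `O(1)`
according as `τ < 3`, `τ = 3` or `τ > 3`.
-/

open MeasureTheory ProbabilityTheory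

/-- The normalizing constant `C_τ = (∑_{j ≥ 3} j^{-τ})⁻¹` of the power-law distribution. -/
noncomputable def Ctau (τ : ℝ) : ℝ := (∑' j : ℕ, if 3 ≤ j then (j : ℝ) ^ (-τ) else 0)⁻¹

open Finset Set

section RpowSums

lemma exists_rpow_add_one_sub_rpow_eq {r x : ℝ} (hx : 0 ≤ x) (hr : 0 < x ∨ 0 ≤ r) :
    ∃ ξ ∈ Ioo x (x + 1), (x + 1) ^ r - x ^ r = r * ξ ^ (r - 1) := by
  obtain ⟨ξ, hξ, h⟩ := exists_hasDerivAt_eq_slope (fun t : ℝ => t ^ r) (fun t => r * t ^ (r - 1))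
    (lt_add_one x)
    (fun t ht => (Real.continuousAt_rpow_const t r
      (hr.imp (fun h => (h.trans_le ht.1).ne') id)).continuousWithinAt)
    (fun t ht => Real.hasDerivAt_rpow_const (Or.inl (hx.trans_lt ht.1).ne'))
  exact ⟨ξ, hξ, by rw [h, add_sub_cancel_left, div_one]⟩

lemma mul_rpow_le_rpow_add_one_sub_rpow {c x : ℝ} (hc₀ : 0 ≤ c) (hc₁ : c ≤ 1) (hx : 0 ≤ x) :
    c * (x + 1) ^ (c - 1) ≤ (x + 1) ^ c - x ^ c := by
  obtain ⟨ξ, hξ, h⟩ := exists_rpow_add_one_sub_rpow_eq hx (Or.inr hc₀)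
  rw [h]
  exact mul_le_mul_of_nonneg_left
    (Real.rpow_le_rpow_of_nonpos (hx.trans_lt hξ.1) hξ.2.le (by linarith)) hc₀

lemma rpow_add_one_sub_rpow_le_mul {r x : ℝ} (hr : r ≤ 0) (hx : 0 < x) :
    (x + 1) ^ r - x ^ r ≤ r * (x + 1) ^ (r - 1) := by
  obtain ⟨ξ, hξ, h⟩ := exists_rpow_add_one_sub_rpow_eq hx.le (Or.inl hx)
  rw [h]
  exact mul_le_mul_of_nonpos_left
    (Real.rpow_le_rpow_of_nonpos (hx.trans hξ.1) hξ.2.le (by linarith)) hr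

lemma tsum_natCast_add_rpow_neg_le {s : ℝ} (hs : 1 < s) {m : ℕ} (hm : 0 < m) :
    ∑' j : ℕ, ((j + (m + 1) : ℕ) : ℝ) ^ (-s) ≤ (m : ℝ) ^ (-(s - 1)) / (s - 1) := by
  set F : ℕ → ℝ := fun j => ((m + j : ℕ) : ℝ) ^ (-(s - 1))
  have hstep : ∀ j, ((j + (m + 1) : ℕ) : ℝ) ^ (-s) ≤ (F j - F (j + 1)) / (s - 1) := fun j => by
    have h := rpow_add_one_sub_rpow_le_mul (r := -(s - 1)) (by linarith)
      (show (0 : ℝ) < (m + j : ℕ) by positivity)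
    rw [le_div_iff₀ (by linarith)]
    simp only [F, show -(s - 1) - 1 = -s by ring] at h ⊢
    push_cast at h ⊢
    rw [show (j : ℝ) + (m + 1) = m + j + 1 by ring, show (m : ℝ) + (j + 1) = m + j + 1 by ring]
    linarith
  refine Real.tsum_le_of_sum_range_le (fun j => by positivity) fun N => ?_
  calc ∑ j ∈ range N, ((j + (m + 1) : ℕ) : ℝ) ^ (-s)
      ≤ ∑ j ∈ range N, (F j - F (j + 1)) / (s - 1) := sum_le_sum fun j _ => hstep j
    _ = (F 0 - F N) / (s - 1) := by rw [← sum_div, sum_range_sub']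
    _ ≤ F 0 / (s - 1) := by gcongr; exact sub_le_self _ (by positivity)
    _ = (m : ℝ) ^ (-(s - 1)) / (s - 1) := by simp [F]

lemma sum_range_add_one_rpow_le {c : ℝ} (hc₀ : 0 < c) (hc₁ : c ≤ 1) (n : ℕ) :
    ∑ k ∈ range n, ((k : ℝ) + 1) ^ (c - 1) ≤ (n : ℝ) ^ c / c := by
  rw [le_div_iff₀ hc₀, sum_mul]
  calc ∑ k ∈ range n, ((k : ℝ) + 1) ^ (c - 1) * c
      ≤ ∑ k ∈ range n, (((k + 1 : ℕ) : ℝ) ^ c - (k : ℝ) ^ c) := sum_le_sum fun k _ => by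
        rw [mul_comm]; push_cast
        exact mul_rpow_le_rpow_add_one_sub_rpow hc₀.le hc₁ k.cast_nonneg
    _ = (n : ℝ) ^ c := by
        rw [sum_range_sub (fun k : ℕ => (k : ℝ) ^ c)]
        simp [Real.zero_rpow hc₀.ne']

lemma sum_range_add_one_rpow_neg_one_le (n : ℕ) :
    ∑ k ∈ range n, ((k : ℝ) + 1) ^ (-1 : ℝ) ≤ 1 + Real.log n := by
  convert harmonic_le_one_add_log n using 1
  simp [harmonic, Real.rpow_neg_one]

lemma sum_range_add_one_rpow_div_le_of_lt_three {τ : ℝ} (hτ : 2 < τ) (h3 : τ < 3) {n : ℕ}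
    (hn : 0 < n) :
    (∑ k ∈ range n, ((k : ℝ) + 1) ^ (2 - τ)) / n ≤ 1 / (3 - τ) * (n : ℝ) ^ (-(τ - 2)) := by
  have h := sum_range_add_one_rpow_le (c := 3 - τ) (by linarith) (by linarith) n
  rw [show 3 - τ - 1 = 2 - τ by ring] at h
  calc (∑ k ∈ range n, ((k : ℝ) + 1) ^ (2 - τ)) / n ≤ (n : ℝ) ^ (3 - τ) / (3 - τ) / n := by gcongr
    _ = 1 / (3 - τ) * (n : ℝ) ^ (-(τ - 2)) := by
      rw [show -(τ - 2) = 3 - τ - 1 by ring, Real.rpow_sub_one (by positivity)]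
      ring

lemma one_le_log_natCast {n : ℕ} (hn : 3 ≤ n) : 1 ≤ Real.log n := by
  rw [Real.le_log_iff_exp_le (by positivity)]
  exact (Real.exp_one_lt_d9.trans_le (by norm_num : (2.7182818286 : ℝ) ≤ 3)).le.trans
    (by exact_mod_cast hn)

lemma sum_range_add_one_rpow_div_le_of_eq_three {τ : ℝ} (h3 : τ = 3) {n : ℕ} (hn : 3 ≤ n) :
    (∑ k ∈ range n, ((k : ℝ) + 1) ^ (2 - τ)) / n ≤ 2 * (Real.log n / n) := by
  have h := sum_range_add_one_rpow_neg_one_le n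
  rw [h3, show (2 : ℝ) - 3 = -1 by norm_num, ← mul_div_assoc]
  gcongr
  linarith [one_le_log_natCast hn]

lemma natCast_rpow_neg_sub_two_le_log_div {τ : ℝ} (h3 : τ = 3) {n : ℕ} (hn : 3 ≤ n) :
    (n : ℝ) ^ (-(τ - 2)) ≤ Real.log n / n := by
  rw [h3, show -((3 : ℝ) - 2) = -1 by norm_num, Real.rpow_neg_one, ← one_div]
  gcongr
  exact one_le_log_natCast hn

lemma natCast_rpow_neg_sub_two_le_one_div {τ : ℝ} (h3 : 3 ≤ τ) {n : ℕ} (hn : 0 < n) :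
    (n : ℝ) ^ (-(τ - 2)) ≤ 1 / n := by
  rw [one_div, ← Real.rpow_neg_one]
  exact Real.rpow_le_rpow_of_exponent_le (by exact_mod_cast hn) (by linarith)

lemma sum_range_add_one_rpow_le_tsum {s : ℝ} (hs : s < -1) (n : ℕ) :
    ∑ k ∈ range n, ((k : ℝ) + 1) ^ s ≤ ∑' k : ℕ, ((k : ℝ) + 1) ^ s :=
  Summable.sum_le_tsum _ (fun k _ => by positivity) <| by
    simpa using (summable_nat_add_iff 1).mpr (Real.summable_nat_rpow.mpr hs)

end RpowSums

section NatValued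

variable {Ω : Type*} [MeasurableSpace Ω] {P : Measure Ω} {X : Ω → ℕ} {p : ℕ → ℝ}

lemma map_eq_sum_smul_dirac (hX : Measurable X)
    (hpX : ∀ k, P {ω | X ω = k} = ENNReal.ofReal (p k)) :
    P.map X = Measure.sum fun k => ENNReal.ofReal (p k) • Measure.dirac k := by
  conv_lhs => rw [← Measure.sum_smul_dirac (P.map X)]
  simp_rw [Measure.map_apply hX (measurableSet_singleton _)]
  exact congrArg _ (funext fun k => by rw [← hpX k]; rfl)

lemma integral_comp_eq_tsum (hX : Measurable X)
    (hpX : ∀ k, P {ω | X ω = k} = ENNReal.ofReal (p k)) (hp : ∀ k, 0 ≤ p k) {g : ℕ → ℝ}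
    (hg : Summable fun k => p k * |g k|) : ∫ ω, g (X ω) ∂P = ∑' k, p k * g k := by
  rw [← integral_map hX.aemeasurable measurable_from_top.aestronglyMeasurable,
    map_eq_sum_smul_dirac hX hpX, integral_sum_dirac_eq_tsum (fun _ => ENNReal.ofReal_ne_top)
      (by simpa [ENNReal.toReal_ofReal (hp _)] using hg)]
  simp [ENNReal.toReal_ofReal (hp _)]

lemma measure_lt_eq_tsum (hX : Measurable X)
    (hpX : ∀ k, P {ω | X ω = k} = ENNReal.ofReal (p k)) (hp : ∀ k, 0 ≤ p k) (hps : Summable p)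
    (m : ℕ) : P {ω | m < X ω} = ENNReal.ofReal (∑' j, p (j + (m + 1))) := by
  have hunion : {ω | m < X ω} = ⋃ j : ℕ, {ω | X ω = j + (m + 1)} := by
    ext ω
    simp only [Set.mem_ofPred_eq, Set.mem_iUnion]
    exact ⟨fun h => ⟨X ω - (m + 1), by omega⟩, fun ⟨j, hj⟩ => by omega⟩
  rw [hunion, measure_iUnion, ENNReal.ofReal_tsum_of_nonneg (fun _ => hp _)
    ((summable_nat_add_iff _).mpr hps)]
  · exact tsum_congr fun j => hpX _
  · intro i j hij
    exact Set.disjoint_left.mpr fun ω hi hj => hij (by simp_all)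
  · exact fun j => hX (measurableSet_singleton _)

end NatValued

section Truncation

variable {Ω : Type*} [MeasurableSpace Ω] {P : Measure Ω} [IsProbabilityMeasure P]

lemma measure_le_abs_sum_sub_le_of_iIndepFun {Y : ℕ → Ω → ℝ} (hY : ∀ i, MemLp (Y i) 2 P)
    (hind : iIndepFun Y P) (n : ℕ) {m₁ v ε : ℝ} (hmean : ∀ i, ∫ ω, Y i ω ∂P = m₁)
    (hsq : ∀ i, ∫ ω, Y i ω ^ 2 ∂P ≤ v) (hε : 0 < ε) :
    P {ω | ε ≤ |∑ i ∈ range n, Y i ω - n * m₁|} ≤ ENNReal.ofReal (n * v / ε ^ 2) := by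
  have hS : MemLp (∑ i ∈ range n, Y i) 2 P := memLp_finsetSum' _ fun i _ => hY i
  have hES : ∫ ω, (∑ i ∈ range n, Y i) ω ∂P = n * m₁ := by
    simp_rw [Finset.sum_apply]
    rw [integral_finsetSum _ fun i _ => (hY i).integrable one_le_two]
    simp [hmean]
  have hvar : variance (∑ i ∈ range n, Y i) P ≤ n * v := by
    rw [IndepFun.variance_sum (fun i _ => hY i) fun i _ j _ hij => hind.indepFun hij]
    calc ∑ i ∈ range n, variance (Y i) P ≤ ∑ _i ∈ range n, v :=
          sum_le_sum fun i _ => (variance_le_expectation_sq (hY i).1).trans (hsq i)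
      _ = n * v := by simp
  calc P {ω | ε ≤ |∑ i ∈ range n, Y i ω - n * m₁|}
      = P {ω | ε ≤ |(∑ i ∈ range n, Y i) ω - ∫ ω, (∑ i ∈ range n, Y i) ω ∂P|} := by
        simp_rw [hES, Finset.sum_apply]
    _ ≤ ENNReal.ofReal (variance (∑ i ∈ range n, Y i) P / ε ^ 2) :=
        meas_ge_le_variance_div_sq hS hε
    _ ≤ ENNReal.ofReal (n * v / ε ^ 2) := by gcongr


lemma measure_lt_abs_sum_sub_le_of_truncation {X : ℕ → Ω → ℕ} (hX : ∀ i, Measurable (X i))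
    (hind : iIndepFun X P) (n m : ℕ) {μ m₁ v q t : ℝ}
    (hmean : ∀ i, ∫ ω, (min (X i ω) m : ℝ) ∂P = m₁)
    (hsq : ∀ i, ∫ ω, (min (X i ω) m : ℝ) ^ 2 ∂P ≤ v)
    (htail : ∀ i, P {ω | m < X i ω} ≤ ENNReal.ofReal q) (ht : n * |μ - m₁| < t) :
    P {ω | t < |∑ i ∈ range n, (X i ω : ℝ) - n * μ|} ≤
      n * ENNReal.ofReal q + ENNReal.ofReal (n * v / (t - n * |μ - m₁|) ^ 2) := by
  set Y : ℕ → Ω → ℝ := fun i => (fun k : ℕ => min (k : ℝ) m) ∘ X i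
  have hY : ∀ i, MemLp (Y i) 2 P := fun i =>
    (memLp_top_of_bound (measurable_from_top.comp (hX i)).aestronglyMeasurable m
      (.of_forall fun ω => by simp [abs_of_nonneg])).mono_exponent le_top
  -- off the event that some `X i` exceeds `m`, truncation changes nothing
  have hsub : {ω | t < |∑ i ∈ range n, (X i ω : ℝ) - n * μ|} ⊆
      (⋃ i ∈ range n, {ω | m < X i ω}) ∪
        {ω | t - n * |μ - m₁| ≤ |∑ i ∈ range n, Y i ω - n * m₁|} := by
    intro ω hω
    by_cases hbig : ∃ i ∈ range n, m < X i ω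
    · obtain ⟨i, hi, hlt⟩ := hbig
      exact Or.inl (Set.mem_biUnion hi hlt)
    · push Not at hbig
      have htrunc : ∑ i ∈ range n, Y i ω = ∑ i ∈ range n, (X i ω : ℝ) :=
        sum_congr rfl fun i hi => by simp [Y, hbig i hi]
      right
      simp only [Set.mem_ofPred_eq, htrunc] at hω ⊢
      have := abs_sub_abs_le_abs_sub (∑ i ∈ range n, (X i ω : ℝ) - n * μ)
        (∑ i ∈ range n, (X i ω : ℝ) - n * m₁)
      rw [show ∑ i ∈ range n, (X i ω : ℝ) - n * μ - (∑ i ∈ range n, (X i ω : ℝ) - n * m₁)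
        = -(n * (μ - m₁)) by ring, abs_neg, abs_mul, Nat.abs_cast] at this
      linarith
  calc P {ω | t < |∑ i ∈ range n, (X i ω : ℝ) - n * μ|}
      ≤ P (⋃ i ∈ range n, {ω | m < X i ω}) +
          P {ω | t - n * |μ - m₁| ≤ |∑ i ∈ range n, Y i ω - n * m₁|} :=
        (measure_mono hsub).trans (measure_union_le _ _)
    _ ≤ ∑ i ∈ range n, P {ω | m < X i ω} +
          ENNReal.ofReal (n * v / (t - n * |μ - m₁|) ^ 2) :=
        add_le_add (measure_biUnion_finset_le _ _) (measure_le_abs_sum_sub_le_of_iIndepFun hY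
          (hind.comp _ fun _ => measurable_from_top) n hmean hsq (by linarith))
    _ ≤ n * ENNReal.ofReal q + ENNReal.ofReal (n * v / (t - n * |μ - m₁|) ^ 2) := by
        gcongr
        exact (sum_le_sum fun i _ => htail i).trans (by simp)

lemma measure_half_lt_abs_sum_sub_le {p : ℕ → ℝ} (hp : ∀ k, 0 ≤ p k) (hps : Summable p)
    {X : ℕ → Ω → ℕ} (hX : ∀ i, Measurable (X i)) (hind : iIndepFun X P)
    (hXp : ∀ i k, P {ω | X i ω = k} = ENNReal.ofReal (p k)) {n : ℕ} (hn : 0 < n) {μ : ℝ}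
    (hμ : 0 < μ) (hm₁ : |μ - ∑' k, p k * min (k : ℝ) n| ≤ μ / 4) :
    P {ω | n * μ / 2 < |∑ i ∈ range n, (X i ω : ℝ) - n * μ|} ≤
      ENNReal.ofReal (n * ∑' j, p (j + (n + 1)) +
        16 * (∑' k, p k * min (k : ℝ) n ^ 2) / (n * μ ^ 2)) := by
  have hn' : (0 : ℝ) < n := Nat.cast_pos.mpr hn
  have hmin : ∀ k : ℕ, |min (k : ℝ) n| ≤ n := fun k => by
    rw [abs_of_nonneg (le_min k.cast_nonneg n.cast_nonneg)]; exact min_le_right _ _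
  have hbound := measure_lt_abs_sum_sub_le_of_truncation hX hind n n (μ := μ) (t := n * μ / 2)
    (fun i => integral_comp_eq_tsum (hX i) (hXp i) hp
      ((hps.mul_right (n : ℝ)).of_nonneg_of_le (fun k => mul_nonneg (hp k) (abs_nonneg _))
        fun k => mul_le_mul_of_nonneg_left (hmin k) (hp k)))
    (fun i => (integral_comp_eq_tsum (hX i) (hXp i) hp (g := fun k => min (k : ℝ) n ^ 2)
      ((hps.mul_right ((n : ℝ) ^ 2)).of_nonneg_of_le (fun k => mul_nonneg (hp k) (abs_nonneg _))
        fun k => mul_le_mul_of_nonneg_left (by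
          rw [abs_pow]; exact pow_le_pow_left₀ (abs_nonneg _) (hmin k) 2) (hp k))).le)
    (fun i => (measure_lt_eq_tsum (hX i) (hXp i) hp hps n).le)
    (by nlinarith [mul_le_mul_of_nonneg_left hm₁ hn'.le])
  have hq₀ : 0 ≤ ∑' j, p (j + (n + 1)) := tsum_nonneg fun j => hp _
  have hv₀ : 0 ≤ ∑' k, p k * min (k : ℝ) n ^ 2 :=
    tsum_nonneg fun k => mul_nonneg (hp k) (sq_nonneg _)
  refine hbound.trans ?_
  rw [← ENNReal.ofReal_natCast, ← ENNReal.ofReal_mul n.cast_nonneg,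
    ← ENNReal.ofReal_add (by positivity) (by positivity)]
  refine ENNReal.ofReal_le_ofReal (add_le_add_right ?_ _)
  calc n * (∑' k, p k * min (k : ℝ) n ^ 2) / (n * μ / 2 - n * |μ - ∑' k, p k * min (k : ℝ) n|) ^ 2
      ≤ n * (∑' k, p k * min (k : ℝ) n ^ 2) / (n * μ / 4) ^ 2 := by
        gcongr
        nlinarith [mul_le_mul_of_nonneg_left hm₁ hn'.le]
    _ = 16 * (∑' k, p k * min (k : ℝ) n ^ 2) / (n * μ ^ 2) := by field_simp; ring

end Truncation

section TruncatedMoments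

variable {p : ℕ → ℝ}

lemma abs_tsum_sub_tsum_mul_min_le (hp : ∀ k, 0 ≤ p k) (hs : Summable fun k => p k * k)
    (n : ℕ) :
    |∑' k, p k * k - ∑' k, p k * min (k : ℝ) n| ≤
      ∑' j, p (j + (n + 1)) * ((j + (n + 1) : ℕ) : ℝ) := by
  have hmin : Summable fun k => p k * min (k : ℝ) n :=
    hs.of_nonneg_of_le (fun k => mul_nonneg (hp k) (by positivity))
      (fun k => mul_le_mul_of_nonneg_left (min_le_left _ _) (hp k))
  have hdiff : Summable fun k => p k * (k - min (k : ℝ) n) := by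
    simpa only [mul_sub] using hs.sub hmin
  rw [← hs.tsum_sub hmin, abs_of_nonneg (tsum_nonneg fun k => by
    rw [← mul_sub]; exact mul_nonneg (hp k) (sub_nonneg.mpr (min_le_left _ _)))]
  simp_rw [← mul_sub]
  rw [← hdiff.sum_add_tsum_nat_add (n + 1), sum_eq_zero fun k hk => by
    rw [min_eq_left (by exact_mod_cast Nat.lt_succ_iff.mp (mem_range.mp hk)), sub_self,
      mul_zero], zero_add]
  exact ((summable_nat_add_iff _).mpr hdiff).tsum_le_tsum
    (fun j => mul_le_mul_of_nonneg_left (sub_le_self _ (by positivity)) (hp _))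
    ((summable_nat_add_iff _).mpr hs)

lemma tsum_mul_min_sq_eq (hp : ∀ k, 0 ≤ p k) (hs : Summable p) (n : ℕ) :
    ∑' k, p k * min (k : ℝ) n ^ 2 =
      ∑ k ∈ range (n + 1), p k * (k : ℝ) ^ 2 + n ^ 2 * ∑' j, p (j + (n + 1)) := by
  have hsq : Summable fun k => p k * min (k : ℝ) n ^ 2 :=
    (hs.mul_right ((n : ℝ) ^ 2)).of_nonneg_of_le (fun k => mul_nonneg (hp k) (by positivity))
      fun k => mul_le_mul_of_nonneg_left (pow_le_pow_left₀ (by positivity) (min_le_right _ _) 2)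
        (hp k)
  rw [← hsq.sum_add_tsum_nat_add (n + 1), ← tsum_mul_left]
  congr 1
  · exact sum_congr rfl fun k hk => by
      rw [min_eq_left (by exact_mod_cast Nat.lt_succ_iff.mp (mem_range.mp hk))]
  · exact tsum_congr fun j => by
      rw [min_eq_right (by push_cast; linarith [j.cast_nonneg (α := ℝ)]), mul_comm]

end TruncatedMoments

noncomputable def powerLawMass (τ : ℝ) (k : ℕ) : ℝ := if 3 ≤ k then Ctau τ * (k : ℝ) ^ (-τ) else 0

noncomputable def powerLawMean (τ : ℝ) : ℝ := ∑' k, powerLawMass τ k * k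

namespace PowerLaw

lemma Ctau_nonneg (τ : ℝ) : 0 ≤ Ctau τ :=
  inv_nonneg.mpr (tsum_nonneg fun j => by split_ifs <;> positivity)

lemma Ctau_pos {τ : ℝ} (hτ : 1 < τ) : 0 < Ctau τ := by
  have hs : Summable fun j : ℕ => if 3 ≤ j then (j : ℝ) ^ (-τ) else 0 :=
    (Real.summable_nat_rpow.mpr (neg_lt_neg hτ)).of_nonneg_of_le
      (fun j => by split_ifs <;> positivity) (fun j => by split_ifs <;> [exact le_rfl; positivity])
  have h3 : (0 : ℝ) < if 3 ≤ 3 then ((3 : ℕ) : ℝ) ^ (-τ) else 0 := by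
    rw [if_pos le_rfl]; positivity
  exact inv_pos.mpr (h3.trans_le (hs.le_tsum 3 fun j _ => by positivity))

lemma powerLawMass_nonneg (τ : ℝ) (k : ℕ) : 0 ≤ powerLawMass τ k := by
  unfold powerLawMass; have := Ctau_nonneg τ; split_ifs <;> positivity

lemma powerLawMass_mul_pow_le (τ : ℝ) (k a : ℕ) :
    powerLawMass τ k * (k : ℝ) ^ a ≤ Ctau τ * (k : ℝ) ^ ((a : ℝ) - τ) := by
  have := Ctau_nonneg τ
  unfold powerLawMass
  split_ifs with hk
  · have hk0 : (0 : ℝ) < k := by exact_mod_cast (by omega : 0 < k)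
    rw [sub_eq_add_neg, Real.rpow_add hk0, Real.rpow_natCast]
    exact le_of_eq (by ring)
  · rw [zero_mul]; positivity

lemma summable_powerLawMass_mul_pow {τ : ℝ} {a : ℕ} (ha : a + 1 < τ) :
    Summable fun k => powerLawMass τ k * (k : ℝ) ^ a :=
  ((Real.summable_nat_rpow.mpr (by linarith)).mul_left (Ctau τ)).of_nonneg_of_le
    (fun k => by have := powerLawMass_nonneg τ k; positivity) (powerLawMass_mul_pow_le τ · a)

lemma summable_powerLawMass_mul_natCast {τ : ℝ} (hτ : 2 < τ) :
    Summable fun k => powerLawMass τ k * k := by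
  simpa using summable_powerLawMass_mul_pow (τ := τ) (a := 1) (by norm_num; linarith)

lemma tsum_powerLawMass_mul_pow_nat_add_le {τ : ℝ} {a : ℕ} (ha : a + 1 < τ) {m : ℕ} (hm : 0 < m) :
    ∑' j, powerLawMass τ (j + (m + 1)) * ((j + (m + 1) : ℕ) : ℝ) ^ a ≤
      Ctau τ / (τ - a - 1) * (m : ℝ) ^ (-(τ - a - 1)) := by
  have hs : 1 < τ - a := by linarith
  calc ∑' j, powerLawMass τ (j + (m + 1)) * ((j + (m + 1) : ℕ) : ℝ) ^ a
      ≤ ∑' j : ℕ, Ctau τ * ((j + (m + 1) : ℕ) : ℝ) ^ (-(τ - a)) :=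
        Summable.tsum_le_tsum (fun j => by rw [neg_sub]; exact powerLawMass_mul_pow_le τ _ a)
          ((summable_nat_add_iff _).mpr (summable_powerLawMass_mul_pow ha))
          (((summable_nat_add_iff _).mpr (Real.summable_nat_rpow.mpr (by linarith))).mul_left _)
    _ = Ctau τ * ∑' j : ℕ, ((j + (m + 1) : ℕ) : ℝ) ^ (-(τ - a)) := tsum_mul_left
    _ ≤ Ctau τ * ((m : ℝ) ^ (-(τ - a - 1)) / (τ - a - 1)) :=
        mul_le_mul_of_nonneg_left (tsum_natCast_add_rpow_neg_le hs hm) (Ctau_nonneg τ)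
    _ = Ctau τ / (τ - a - 1) * (m : ℝ) ^ (-(τ - a - 1)) := by ring

lemma powerLawMean_pos {τ : ℝ} (hτ : 2 < τ) : 0 < powerLawMean τ := by
  have h3 : 0 < powerLawMass τ 3 * (3 : ℕ) := by
    have := Ctau_pos (by linarith : 1 < τ)
    simp only [powerLawMass, le_refl, if_true]
    positivity
  exact h3.trans_le ((summable_powerLawMass_mul_natCast hτ).le_tsum 3
    fun k _ => mul_nonneg (powerLawMass_nonneg τ k) k.cast_nonneg)

lemma sum_range_powerLawMass_mul_sq_le (τ : ℝ) (n : ℕ) :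
    ∑ k ∈ range (n + 1), powerLawMass τ k * (k : ℝ) ^ 2 ≤
      Ctau τ * ∑ k ∈ range n, ((k : ℝ) + 1) ^ (2 - τ) := by
  rw [sum_range_succ', mul_sum, Nat.cast_zero, zero_pow two_ne_zero, mul_zero, add_zero]
  exact sum_le_sum fun k _ => by
    simpa using powerLawMass_mul_pow_le τ (k + 1) 2

variable {Ω : Type*} [MeasurableSpace Ω] {P : Measure Ω}

lemma measure_eq_ofReal_powerLawMass {τ : ℝ} {X : Ω → ℕ} (h0 : ∀ k : ℕ, k < 3 → P {ω | X ω = k} = 0)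
    (h3 : ∀ k : ℕ, 3 ≤ k → P {ω | X ω = k} = ENNReal.ofReal (Ctau τ * (k : ℝ) ^ (-τ))) (k : ℕ) :
    P {ω | X ω = k} = ENNReal.ofReal (powerLawMass τ k) := by
  unfold powerLawMass
  split_ifs with hk
  · exact h3 k hk
  · rw [h0 k (by omega), ENNReal.ofReal_zero]

lemma integral_eq_powerLawMean {τ : ℝ} (hτ : 2 < τ) {X : Ω → ℕ} (hX : Measurable X)
    (hXp : ∀ k, P {ω | X ω = k} = ENNReal.ofReal (powerLawMass τ k)) :
    ∫ ω, (X ω : ℝ) ∂P = powerLawMean τ :=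
  integral_comp_eq_tsum hX hXp (powerLawMass_nonneg τ) (by
    simpa using summable_powerLawMass_mul_natCast hτ)

lemma eventually_tail_le_powerLawMean {τ : ℝ} (hτ : 2 < τ) :
    ∀ᶠ n : ℕ in Filter.atTop, 4 * (Ctau τ / (τ - 2)) * (n : ℝ) ^ (-(τ - 2)) ≤ powerLawMean τ :=
  (((tendsto_rpow_neg_atTop (by linarith)).comp tendsto_natCast_atTop_atTop).const_mul _).eventually
    (ge_mem_nhds (by rw [mul_zero]; exact powerLawMean_pos hτ))

theorem measure_deviation_le [IsProbabilityMeasure P] {τ : ℝ} (hτ : 2 < τ) {n : ℕ} (hn : 0 < n)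
    (hshift : 4 * (Ctau τ / (τ - 2)) * (n : ℝ) ^ (-(τ - 2)) ≤ powerLawMean τ)
    {d : ℕ → Ω → ℕ} (hd : ∀ i, Measurable (d i)) (hind : iIndepFun d P)
    (hdp : ∀ i k, P {ω | d i ω = k} = ENNReal.ofReal (powerLawMass τ k)) :
    P {ω | n * powerLawMean τ / 2 < |∑ i ∈ range n, (d i ω : ℝ) - n * powerLawMean τ|} ≤
      ENNReal.ofReal (Ctau τ / (τ - 1) * (1 + 16 / powerLawMean τ ^ 2) * (n : ℝ) ^ (-(τ - 2)) +
        16 * Ctau τ / powerLawMean τ ^ 2 * (∑ k ∈ range n, ((k : ℝ) + 1) ^ (2 - τ)) / n) := by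
  set μ := powerLawMean τ
  set p := powerLawMass τ
  set H := ∑ k ∈ range n, ((k : ℝ) + 1) ^ (2 - τ)
  have hp : ∀ k, 0 ≤ p k := powerLawMass_nonneg τ
  have hμ : 0 < μ := powerLawMean_pos hτ
  have hn' : (0 : ℝ) < n := Nat.cast_pos.mpr hn
  have hps : Summable p := by
    simpa using summable_powerLawMass_mul_pow (τ := τ) (a := 0) (by norm_num; linarith)
  have hps₁ : Summable fun k => p k * k := summable_powerLawMass_mul_natCast hτ
  have hq : ∑' j, p (j + (n + 1)) ≤ Ctau τ / (τ - 1) * (n : ℝ) ^ (-(τ - 2)) / n := by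
    have := tsum_powerLawMass_mul_pow_nat_add_le (τ := τ) (a := 0) (by norm_num; linarith) hn
    rw [show -(τ - 2) = -(τ - 1) + 1 by ring, Real.rpow_add_one hn'.ne', mul_div_assoc,
      mul_div_cancel_right₀ _ hn'.ne']
    simpa using this
  have hm₁ : |μ - ∑' k, p k * min (k : ℝ) n| ≤ μ / 4 := by
    refine (abs_tsum_sub_tsum_mul_min_le hp hps₁ n).trans ?_
    have := tsum_powerLawMass_mul_pow_nat_add_le (τ := τ) (a := 1) (by norm_num; linarith) hn
    simp only [pow_one, Nat.cast_one, sub_sub, one_add_one_eq_two] at this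
    linarith
  have hv : ∑' k, p k * min (k : ℝ) n ^ 2 ≤ Ctau τ * H + n ^ 2 * ∑' j, p (j + (n + 1)) := by
    rw [tsum_mul_min_sq_eq hp hps n]
    gcongr
    exact sum_range_powerLawMass_mul_sq_le τ n
  have hq₀ : 0 ≤ ∑' j, p (j + (n + 1)) := tsum_nonneg fun j => hp _
  refine (measure_half_lt_abs_sum_sub_le hp hps hd hind hdp hn hμ hm₁).trans
    (ENNReal.ofReal_le_ofReal ?_)
  generalize ∑' j, p (j + (n + 1)) = q at hq hv hq₀ ⊢
  generalize ∑' k, p k * min (k : ℝ) n ^ 2 = v at hv ⊢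
  have hnq : n * q ≤ Ctau τ / (τ - 1) * (n : ℝ) ^ (-(τ - 2)) := by
    rwa [le_div_iff₀ hn', mul_comm] at hq
  calc n * q + 16 * v / (n * μ ^ 2)
      ≤ n * q + 16 * (Ctau τ * H + n ^ 2 * q) / (n * μ ^ 2) := by gcongr
    _ = n * q * (1 + 16 / μ ^ 2) + 16 * Ctau τ / μ ^ 2 * H / n := by field_simp; ring
    _ ≤ Ctau τ / (τ - 1) * (n : ℝ) ^ (-(τ - 2)) * (1 + 16 / μ ^ 2) +
          16 * Ctau τ / μ ^ 2 * H / n := by gcongr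
    _ = _ := by ring

end PowerLaw

open PowerLaw in
/-- Concentration of the total degree of `n` i.i.d. power-law degrees around its mean
`nμ`, with error probability `c' n^{−(τ−2)}` for `2 < τ < 3`, `c' (log n)/n` for `τ = 3`,
and `c'/n` for `τ > 3`. -/
theorem powerLaw_sum_concentration (τ : ℝ) (hτ : 2 < τ) :
    ∃ c' : ℝ, 0 < c' ∧ ∃ N : ℕ, ∀ n : ℕ, N ≤ n →
      ∀ (Ω : Type) (mΩ : MeasurableSpace Ω) (P : Measure Ω), IsProbabilityMeasure P →
      ∀ d : ℕ → Ω → ℕ,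
      (∀ i, Measurable (d i)) →
      iIndepFun d P →
      (∀ i, ∀ k : ℕ, k < 3 → P {ω | d i ω = k} = 0) →
      (∀ i, ∀ k : ℕ, 3 ≤ k →
          P {ω | d i ω = k} = ENNReal.ofReal (Ctau τ * (k : ℝ) ^ (-τ))) →
      ((τ < 3 →
          P {ω | n * (∫ ω', (d 0 ω' : ℝ) ∂P) / 2 <
              |(∑ i ∈ Finset.range n, (d i ω : ℝ)) - n * ∫ ω', (d 0 ω' : ℝ) ∂P|} ≤
            ENNReal.ofReal (c' * (n : ℝ) ^ (-(τ - 2)))) ∧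
       (τ = 3 →
          P {ω | n * (∫ ω', (d 0 ω' : ℝ) ∂P) / 2 <
              |(∑ i ∈ Finset.range n, (d i ω : ℝ)) - n * ∫ ω', (d 0 ω' : ℝ) ∂P|} ≤
            ENNReal.ofReal (c' * Real.log n / n)) ∧
       (3 < τ →
          P {ω | n * (∫ ω', (d 0 ω' : ℝ) ∂P) / 2 <
              |(∑ i ∈ Finset.range n, (d i ω : ℝ)) - n * ∫ ω', (d 0 ω' : ℝ) ∂P|} ≤
            ENNReal.ofReal (c' / n))) := by
  set μ := powerLawMean τ
  set A := Ctau τ / (τ - 1) * (1 + 16 / μ ^ 2)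
  set B := 16 * Ctau τ / μ ^ 2
  -- `K` bounds the head-sum factor in all three regimes at once; an entry of the `max` that is a
  -- junk value in the regime at hand is simply not the one used
  set K := max (1 / (3 - τ)) (max 2 (∑' k : ℕ, ((k : ℝ) + 1) ^ (2 - τ)))
  have hA : 0 < A := mul_pos (div_pos (Ctau_pos (by linarith)) (by linarith)) (by positivity)
  have hB : 0 ≤ B := by have := Ctau_nonneg τ; positivity
  have hK : 0 ≤ K := le_max_of_le_right (le_max_of_le_left zero_le_two)
  obtain ⟨N, hN⟩ := Filter.eventually_atTop.mp
    ((eventually_tail_le_powerLawMean hτ).and (Filter.eventually_ge_atTop 3))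
  refine ⟨A + B * K, add_pos_of_pos_of_nonneg hA (mul_nonneg hB hK), N,
    fun n hn Ω _ P _ d hd hind h0 h3 => ?_⟩
  obtain ⟨hshift, hn3⟩ := hN n hn
  have hdp := fun i => measure_eq_ofReal_powerLawMass (h0 i) (h3 i)
  rw [integral_eq_powerLawMean hτ (hd 0) (hdp 0)]
  have hdev := measure_deviation_le hτ (by omega) hshift hd hind hdp
  have hcomb : ∀ r, (n : ℝ) ^ (-(τ - 2)) ≤ r →
      (∑ k ∈ range n, ((k : ℝ) + 1) ^ (2 - τ)) / n ≤ K * r →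
      P {ω | n * μ / 2 < |∑ i ∈ range n, (d i ω : ℝ) - n * μ|} ≤
        ENNReal.ofReal ((A + B * K) * r) :=
    fun r hx hH => hdev.trans <| ENNReal.ofReal_le_ofReal <| by
      rw [mul_div_assoc]
      nlinarith
  refine ⟨fun hτ3 => hcomb _ le_rfl ?_, fun hτ3 => ?_, fun hτ3 => ?_⟩
  · exact (sum_range_add_one_rpow_div_le_of_lt_three hτ hτ3 (by omega)).trans
      (by gcongr; exact le_max_left _ _)
  · exact (hcomb _ (natCast_rpow_neg_sub_two_le_log_div hτ3 hn3)
      ((sum_range_add_one_rpow_div_le_of_eq_three hτ3 hn3).trans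
        (by gcongr; exact le_max_of_le_right (le_max_left _ _)))).trans_eq (by rw [mul_div_assoc])
  · refine (hcomb _ (natCast_rpow_neg_sub_two_le_one_div hτ3.le (by omega)) ?_).trans_eq
      (by rw [mul_one_div])
    rw [← div_eq_mul_one_div]
    gcongr
    exact (sum_range_add_one_rpow_le_tsum (by linarith) n).trans
      (le_max_of_le_right (le_max_right _ _))
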